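/- arXiv:1204.5672 — 4 statements merged into one kernel-verified Lean document; each statement's English description precedes it below -/
import Mathlib

section
/- Let M be a preGarside monoid and let X be a nonempty subset of M. (1) The set {a ∈ M : a ⪯_L x for all x ∈ X} has a greatest element (for the order ⪯_L), denoted ∧_L X; similarly the set {a ∈ M : a ⪯_R x for all x ∈ X} has a greatest element (for ⪯_R), denoted ∧_R X. (2) If the set {a ∈ M : x ⪯_L a for all x ∈ X} is nonempty, then it has a least element (for ⪯_L), denoted ∨_L X; similarly, if {a ∈ M : x ⪯_R a for all x ∈ X} is nonempty, it has a least element (for ⪯_R), denoted ∨_R X. -/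
namespace PG

variable {M : Type*} [Monoid M]

/-- `LDvd a b` : `a` left-divides `b`. -/
def LDvd (a b : M) : Prop := ∃ c, b = a * c

/-- `RDvd a b` : `a` right-divides `b`. -/
def RDvd (a b : M) : Prop := ∃ c, b = c * a

/-- A monoid is cancellative if `c * a * d = c * b * d` implies `a = b`. -/
def IsCancellative (M : Type*) [Monoid M] : Prop :=
  ∀ a b c d : M, c * a * d = c * b * d → a = b

/-- A monoid is atomic if it admits a norm `ν : M → ℕ` with `ν a > 0` for `a ≠ 1`
and `ν (a * b) ≥ ν a + ν b`. -/
def IsAtomicMon (M : Type*) [Monoid M] : Prop :=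
  ∃ ν : M → ℕ, (∀ a : M, a ≠ 1 → 0 < ν a) ∧ ∀ a b : M, ν a + ν b ≤ ν (a * b)

/-- `m` is the least common multiple of `a` and `b` for left-divisibility. -/
def IsLcmL (a b m : M) : Prop :=
  LDvd a m ∧ LDvd b m ∧ ∀ c : M, LDvd a c → LDvd b c → LDvd m c

/-- `m` is the least common multiple of `a` and `b` for right-divisibility. -/
def IsLcmR (a b m : M) : Prop :=
  RDvd a m ∧ RDvd b m ∧ ∀ c : M, RDvd a c → RDvd b c → RDvd m c

/-- `d` is the greatest common left-divisor of `a` and `b`. -/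
def IsGcdL (a b d : M) : Prop :=
  LDvd d a ∧ LDvd d b ∧ ∀ c : M, LDvd c a → LDvd c b → LDvd c d

/-- `d` is the greatest common right-divisor of `a` and `b`. -/
def IsGcdR (a b d : M) : Prop :=
  RDvd d a ∧ RDvd d b ∧ ∀ c : M, RDvd c a → RDvd c b → RDvd c d

/-- A preGarside monoid: cancellative, atomic, and any two elements admitting a
common multiple (on the appropriate side) admit a least one. -/
def IsPreGarside (M : Type*) [Monoid M] : Prop :=
  IsCancellative M ∧ IsAtomicMon M ∧
    (∀ a b : M, (∃ c, LDvd a c ∧ LDvd b c) → ∃ m, IsLcmL a b m) ∧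
    (∀ a b : M, (∃ c, RDvd a c ∧ RDvd b c) → ∃ m, IsLcmR a b m)

/-- A submonoid is special if it is closed under factors. -/
def IsSpecial (N : Submonoid M) : Prop := ∀ a b : M, a * b ∈ N → a ∈ N ∧ b ∈ N

/-- A (standard) parabolic submonoid: special and closed under all existing lcms. -/
def IsParabolic (N : Submonoid M) : Prop :=
  IsSpecial N ∧ (∀ a b m : M, a ∈ N → b ∈ N → IsLcmL a b m → m ∈ N) ∧
    ∀ a b m : M, a ∈ N → b ∈ N → IsLcmR a b m → m ∈ N

/-- `b` is a factor of `a`. -/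
def Factor (b a : M) : Prop := ∃ c d : M, a = c * b * d

/-- The set of factors of `a`. -/
def Factors (a : M) : Set M := {b | Factor b a}

/-- An element is balanced when its left-divisors and right-divisors coincide. -/
def IsBalanced (a : M) : Prop := {b : M | LDvd b a} = {b : M | RDvd b a}

/-- A Garside element: balanced, and its factors generate the monoid. -/
def IsGarsideElt (Δ : M) : Prop := IsBalanced Δ ∧ Submonoid.closure (Factors Δ) = ⊤

/-- A Garside monoid: a preGarside monoid possessing a Garside element. -/
def IsGarside (M : Type*) [Monoid M] : Prop := IsPreGarside M ∧ ∃ Δ : M, IsGarsideElt Δ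

/-- The factors of `a` computed inside the submonoid `N`. -/
def FactorsIn (N : Submonoid M) (a : M) : Set M :=
  {b | b ∈ N ∧ ∃ c ∈ N, ∃ d ∈ N, a = c * b * d}

/-- `Δ` is a Garside element of the submonoid `N`: it is balanced in `N` and its
factors in `N` generate `N`. -/
def IsGarsideEltIn (N : Submonoid M) (Δ : M) : Prop :=
  Δ ∈ N ∧ ({b : M | b ∈ N ∧ ∃ c ∈ N, Δ = b * c} = {b : M | b ∈ N ∧ ∃ c ∈ N, Δ = c * b}) ∧
    Submonoid.closure (FactorsIn N Δ) = N

/-- The right coset `g * N` (an `R_N`-class). -/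
def RCoset (N : Submonoid M) (g : M) : Set M := {x | ∃ h ∈ N, x = g * h}

/-- The left coset `N * g` (an `L_N`-class). -/
def LCoset (N : Submonoid M) (g : M) : Set M := {x | ∃ h ∈ N, x = h * g}

/-- `RReduces N B A` : the `R_N`-class `B` reduces in one step to the `R_N`-class `A`,
i.e. `A = g₁ N`, `B = g₂ N` with `g₂ ∈ g₁ N` and `g₁ ∉ g₂ N`. -/
def RReduces (N : Submonoid M) (B A : Set M) : Prop :=
  ∃ g₁ g₂ : M, A = RCoset N g₁ ∧ B = RCoset N g₂ ∧ g₂ ∈ RCoset N g₁ ∧ g₁ ∉ RCoset N g₂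

/-- `LReduces N B A` : the `L_N`-class `B` reduces in one step to the `L_N`-class `A`. -/
def LReduces (N : Submonoid M) (B A : Set M) : Prop :=
  ∃ g₁ g₂ : M, A = LCoset N g₁ ∧ B = LCoset N g₂ ∧ g₂ ∈ LCoset N g₁ ∧ g₁ ∉ LCoset N g₂

/-- `N` has the `R` confluence property: the reduction rule on `R_N`-classes is
Noetherian and locally confluent. -/
def RConfluence (N : Submonoid M) : Prop :=
  (¬ ∃ f : ℕ → Set M, ∀ n : ℕ, RReduces N (f n) (f (n + 1))) ∧
    ∀ C A B : Set M, RReduces N C A → RReduces N C B →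
      ∃ D : Set M, Relation.ReflTransGen (RReduces N) A D ∧
        Relation.ReflTransGen (RReduces N) B D

/-- `N` has the `L` confluence property. -/
def LConfluence (N : Submonoid M) : Prop :=
  (¬ ∃ f : ℕ → Set M, ∀ n : ℕ, LReduces N (f n) (f (n + 1))) ∧
    ∀ C A B : Set M, LReduces N C A → LReduces N C B →
      ∃ D : Set M, Relation.ReflTransGen (LReduces N) A D ∧
        Relation.ReflTransGen (LReduces N) B D

/-- `N` has the confluence property. -/
def Confluence (N : Submonoid M) : Prop := RConfluence N ∧ LConfluence N

/-- The `R_N`-class `C` is minimal: whenever `g` represents `C` and `g = g' * h` with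
`h ∈ N`, one has `g' N = C`. -/
def IsMinimalRCoset (N : Submonoid M) (C : Set M) : Prop :=
  (∃ g : M, C = RCoset N g) ∧
    ∀ g g' h : M, h ∈ N → C = RCoset N g → g = g' * h → RCoset N g' = C

/-- The `L_N`-class `C` is minimal. -/
def IsMinimalLCoset (N : Submonoid M) (C : Set M) : Prop :=
  (∃ g : M, C = LCoset N g) ∧
    ∀ g g' h : M, h ∈ N → C = LCoset N g → g = h * g' → LCoset N g' = C

/-- The set of atoms of `M`. -/
def AtomSet (M : Type*) [Monoid M] : Set M :=
  {a | a ≠ 1 ∧ ∀ b c : M, a = b * c → b = 1 ∨ c = 1}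

/-- `|x|` : the least number of factors of `Δ` needed to write `x` as a product. -/
noncomputable def lenFactors (Δ x : M) : ℕ :=
  sInf {k | ∃ l : List M, l.length = k ∧ (∀ y ∈ l, y ∈ Factors Δ) ∧ l.prod = x}

section Amalgam

variable {M₁ M₂ N : Type*} [Monoid M₁] [Monoid M₂] [Monoid N]

/-- The congruence on the free product `M₁ ∗ M₂` identifying `ι₁ h` with `ι₂ h`
for every `h ∈ N`. -/
def amalgamCon (ι₁ : N →* M₁) (ι₂ : N →* M₂) : Con (Monoid.Coprod M₁ M₂) :=
  conGen fun a b => ∃ h : N, a = Monoid.Coprod.inl (ι₁ h) ∧ b = Monoid.Coprod.inr (ι₂ h)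

/-- The amalgamated product `M₁ *_N M₂` : the pushout of `ι₁ : N →* M₁` and
`ι₂ : N →* M₂` in the category of monoids. -/
def Amalgam (ι₁ : N →* M₁) (ι₂ : N →* M₂) : Type _ := (amalgamCon ι₁ ι₂).Quotient

instance (ι₁ : N →* M₁) (ι₂ : N →* M₂) : Monoid (Amalgam ι₁ ι₂) :=
  inferInstanceAs (Monoid (amalgamCon ι₁ ι₂).Quotient)

/-- The canonical morphism `M₁ →* M₁ *_N M₂`. -/
def amalgamInl (ι₁ : N →* M₁) (ι₂ : N →* M₂) : M₁ →* Amalgam ι₁ ι₂ :=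
  (amalgamCon ι₁ ι₂).mk'.comp Monoid.Coprod.inl

/-- The canonical morphism `M₂ →* M₁ *_N M₂`. -/
def amalgamInr (ι₁ : N →* M₁) (ι₂ : N →* M₂) : M₂ →* Amalgam ι₁ ι₂ :=
  (amalgamCon ι₁ ι₂).mk'.comp Monoid.Coprod.inr

end Amalgam

section StrictMonoNorm

variable {α : Type*} [Preorder α] [OrderBot α] {ν : α → ℕ} (hmono : Monotone ν)
  (hstrict : StrictMono ν)
  (hsup : ∀ a b : α, (∃ c, a ≤ c ∧ b ≤ c) → ∃ m, a ≤ m ∧ b ≤ m ∧ ∀ c, a ≤ c → b ≤ c → m ≤ c)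
include hmono hstrict hsup

/- On lower bounds of `s` the norm is bounded by `ν x₀`, so some lower bound `d` has maximal norm.
For any lower bound `a`, the join of `a` and `d` is again a lower bound, lies above `d` and has no
larger norm, so strict monotonicity forces it below `d`. -/
theorem exists_isGLB_of_nonempty {s : Set α} (hs : s.Nonempty) : ∃ d, IsGLB s d := by
  obtain ⟨x₀, hx₀⟩ := hs
  have hbdd : BddAbove (ν '' lowerBounds s) :=
    ⟨ν x₀, by rintro _ ⟨a, ha, rfl⟩; exact hmono (ha hx₀)⟩
  obtain ⟨_, ⟨d, hd, rfl⟩, hdmax⟩ :=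
    hbdd.exists_isGreatest_of_nonempty ⟨ν ⊥, ⊥, fun _ _ => bot_le, rfl⟩
  refine ⟨d, hd, fun a ha => ?_⟩
  obtain ⟨m, ham, hdm, hmin⟩ := hsup a d ⟨x₀, ha hx₀, hd hx₀⟩
  have hm : m ∈ lowerBounds s := fun x hx => hmin x (ha hx) (hd hx)
  have hmd : m ≤ d := by
    by_contra hmd
    exact (hstrict (lt_of_le_not_ge hdm hmd)).not_ge (hdmax ⟨m, hm, rfl⟩)
  exact ham.trans hmd

theorem exists_isLUB_of_bddAbove {s : Set α} (hs : BddAbove s) : ∃ m, IsLUB s m := by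
  obtain ⟨m, hm⟩ := exists_isGLB_of_nonempty hmono hstrict hsup hs
  exact ⟨m, isGLB_upperBounds.1 hm⟩

end StrictMonoNorm

/- Type synonyms of `M` carrying the left- and right-divisibility preorders. -/
def LeftDiv (M : Type*) := M

def RightDiv (M : Type*) := M

theorem LDvd.refl (a : M) : LDvd a a := ⟨1, (mul_one a).symm⟩

theorem LDvd.trans {a b c : M} : LDvd a b → LDvd b c → LDvd a c := by
  rintro ⟨x, rfl⟩ ⟨y, rfl⟩
  exact ⟨x * y, mul_assoc a x y⟩

theorem RDvd.refl (a : M) : RDvd a a := ⟨1, (one_mul a).symm⟩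

theorem RDvd.trans {a b c : M} : RDvd a b → RDvd b c → RDvd a c := by
  rintro ⟨x, rfl⟩ ⟨y, rfl⟩
  exact ⟨y * x, (mul_assoc y x a).symm⟩

instance : Preorder (LeftDiv M) where
  le := LDvd (M := M)
  le_refl := LDvd.refl (M := M)
  le_trans _ _ _ := LDvd.trans (M := M)

instance : OrderBot (LeftDiv M) where
  bot := (1 : M)
  bot_le a := ⟨a, (one_mul (M := M) a).symm⟩

instance : Preorder (RightDiv M) where
  le := RDvd (M := M)
  le_refl := RDvd.refl (M := M)
  le_trans _ _ _ := RDvd.trans (M := M)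

instance : OrderBot (RightDiv M) where
  bot := (1 : M)
  bot_le a := ⟨a, (mul_one (M := M) a).symm⟩

section Norm

variable {ν : M → ℕ} (hadd : ∀ a b : M, ν a + ν b ≤ ν (a * b))
include hadd

theorem monotone_leftDiv : Monotone (α := LeftDiv M) ν := by
  rintro (a : M) _ ⟨c, rfl⟩
  exact le_of_add_le_left (hadd a c)

theorem monotone_rightDiv : Monotone (α := RightDiv M) ν := by
  rintro (a : M) _ ⟨c, rfl⟩
  exact le_of_add_le_right (hadd c a)

variable (hpos : ∀ a : M, a ≠ 1 → 0 < ν a)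
include hpos

theorem strictMono_leftDiv : StrictMono (α := LeftDiv M) ν := by
  rintro (a : M) _ ⟨⟨c, rfl⟩, hnot⟩
  have hc : c ≠ 1 := by
    rintro rfl
    exact hnot ⟨1, by simp⟩
  exact lt_of_lt_of_le (Nat.lt_add_of_pos_right (hpos c hc)) (hadd a c)

theorem strictMono_rightDiv : StrictMono (α := RightDiv M) ν := by
  rintro (a : M) _ ⟨⟨c, rfl⟩, hnot⟩
  have hc : c ≠ 1 := by
    rintro rfl
    exact hnot ⟨1, by simp⟩
  exact lt_of_lt_of_le (Nat.lt_add_of_pos_left (hpos c hc)) (hadd c a)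

end Norm

/-- **Lemma 2.1.** In a preGarside monoid, every nonempty subset `X` has a greatest
common left-divisor and a greatest common right-divisor, and it has a least common
multiple for left- (resp. right-) divisibility as soon as it has a common multiple. -/
theorem lemma_2_1 {M : Type*} [Monoid M] (hM : IsPreGarside M) (X : Set M)
    (hX : X.Nonempty) :
    (∃ d : M, (∀ x ∈ X, LDvd d x) ∧ ∀ a : M, (∀ x ∈ X, LDvd a x) → LDvd a d) ∧
    (∃ d : M, (∀ x ∈ X, RDvd d x) ∧ ∀ a : M, (∀ x ∈ X, RDvd a x) → RDvd a d) ∧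
    ((∃ a : M, ∀ x ∈ X, LDvd x a) →
      ∃ m : M, (∀ x ∈ X, LDvd x m) ∧ ∀ a : M, (∀ x ∈ X, LDvd x a) → LDvd m a) ∧
    ((∃ a : M, ∀ x ∈ X, RDvd x a) →
      ∃ m : M, (∀ x ∈ X, RDvd x m) ∧ ∀ a : M, (∀ x ∈ X, RDvd x a) → RDvd m a) := by
  obtain ⟨-, ⟨ν, hpos, hadd⟩, hlcmL, hlcmR⟩ := hM
  have hmonoL := monotone_leftDiv hadd
  have hstrictL := strictMono_leftDiv hadd hpos
  have hmonoR := monotone_rightDiv hadd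
  have hstrictR := strictMono_rightDiv hadd hpos
  exact ⟨exists_isGLB_of_nonempty (α := LeftDiv M) hmonoL hstrictL hlcmL hX,
    exists_isGLB_of_nonempty (α := RightDiv M) hmonoR hstrictR hlcmR hX,
    exists_isLUB_of_bddAbove (α := LeftDiv M) hmonoL hstrictL hlcmL,
    exists_isLUB_of_bddAbove (α := RightDiv M) hmonoR hstrictR hlcmR⟩

end PG
end

section
/- Let M be a preGarside monoid and let N be a parabolic submonoid of M. (1) N is itself a preGarside monoid. (2) For every nonempty subset X of N, the elements ∧_L X and ∧_R X (computed in M) belong to N; similarly, ∨_L X and ∨_R X belong to N whenever they exist in M. -/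
namespace PG

variable {M : Type*} [Monoid M]

/-!
A divisor of an element of a special submonoid lies in it, which settles the gcds at once and
shows that divisibility and lcms inside `N` are those of `M`. For the lcm `m` of `X ⊆ N`, climb
from `1` inside `N`: as long as the current `y ∈ N` (a left divisor of `m`) is not a common
multiple of `X`, replace it by `y ∨_L x ∈ N` for an `x ∈ X` not dividing `y`. This stays below
`m` and strictly raises the norm, which is bounded by that of `m`, so the climb ends at `y = m`.
-/

section Divisibility

variable {a b : M}

/-- `IsAtomicMon M` unfolds to `∃ ν, IsAtomicNorm ν`. -/
def IsAtomicNorm (ν : M → ℕ) : Prop :=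
  (∀ a : M, a ≠ 1 → 0 < ν a) ∧ ∀ a b : M, ν a + ν b ≤ ν (a * b)

namespace IsAtomicNorm

variable {ν : M → ℕ} (hν : IsAtomicNorm ν)
include hν

theorem le_of_ldvd (h : LDvd a b) : ν a ≤ ν b := by
  obtain ⟨c, rfl⟩ := h
  have := hν.2 a c
  omega

theorem le_of_rdvd (h : RDvd a b) : ν a ≤ ν b := by
  obtain ⟨c, rfl⟩ := h
  have := hν.2 c a
  omega

theorem lt_of_ldvd_of_ne (h : LDvd a b) (hne : a ≠ b) : ν a < ν b := by
  obtain ⟨c, rfl⟩ := h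
  have hc : c ≠ 1 := by rintro rfl; exact hne (mul_one a).symm
  have := hν.1 c hc
  have := hν.2 a c
  omega

theorem lt_of_rdvd_of_ne (h : RDvd a b) (hne : a ≠ b) : ν a < ν b := by
  obtain ⟨c, rfl⟩ := h
  have hc : c ≠ 1 := by rintro rfl; exact hne (one_mul a).symm
  have := hν.1 c hc
  have := hν.2 c a
  omega

end IsAtomicNorm

theorem IsAtomicMon.ldvd_antisymm (hA : IsAtomicMon M) (h₁ : LDvd a b) (h₂ : LDvd b a) :
    a = b := by
  obtain ⟨ν, hν⟩ : ∃ ν : M → ℕ, IsAtomicNorm ν := hA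
  by_contra hne
  exact (hν.lt_of_ldvd_of_ne h₁ hne).not_ge (hν.le_of_ldvd h₂)

theorem IsAtomicMon.rdvd_antisymm (hA : IsAtomicMon M) (h₁ : RDvd a b) (h₂ : RDvd b a) :
    a = b := by
  obtain ⟨ν, hν⟩ : ∃ ν : M → ℕ, IsAtomicNorm ν := hA
  by_contra hne
  exact (hν.lt_of_rdvd_of_ne h₁ hne).not_ge (hν.le_of_rdvd h₂)

end Divisibility

section Submonoid

theorem IsCancellative.submonoid (hC : IsCancellative M) (N : Submonoid M) :
    IsCancellative N :=
  fun a b c d h => Subtype.ext (hC a b c d (congrArg Subtype.val h))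

theorem IsAtomicMon.submonoid (hA : IsAtomicMon M) (N : Submonoid M) : IsAtomicMon N := by
  obtain ⟨ν, hν₀, hνmul⟩ := hA
  exact ⟨fun a => ν a, fun a ha => hν₀ a (by simpa using ha), fun a b => hνmul a b⟩

variable {N : Submonoid M}

theorem IsSpecial.mem_of_ldvd (hN : IsSpecial N) {a b : M} (h : LDvd a b) (hb : b ∈ N) :
    a ∈ N := by
  obtain ⟨c, rfl⟩ := h
  exact (hN a c hb).1

theorem IsSpecial.mem_of_rdvd (hN : IsSpecial N) {a b : M} (h : RDvd a b) (hb : b ∈ N) :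
    a ∈ N := by
  obtain ⟨c, rfl⟩ := h
  exact (hN c a hb).2

theorem IsSpecial.ldvd_coe_iff (hN : IsSpecial N) {a b : N} : LDvd (a : M) b ↔ LDvd a b := by
  refine ⟨fun ⟨c, hc⟩ => ?_, fun ⟨c, hc⟩ => ⟨c, congrArg Subtype.val hc⟩⟩
  have hcN : c ∈ N := (hN a c (hc ▸ b.2)).2
  exact ⟨⟨c, hcN⟩, Subtype.ext hc⟩

theorem IsSpecial.rdvd_coe_iff (hN : IsSpecial N) {a b : N} : RDvd (a : M) b ↔ RDvd a b := by
  refine ⟨fun ⟨c, hc⟩ => ?_, fun ⟨c, hc⟩ => ⟨c, congrArg Subtype.val hc⟩⟩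
  have hcN : c ∈ N := (hN c a (hc ▸ b.2)).1
  exact ⟨⟨c, hcN⟩, Subtype.ext hc⟩

theorem IsParabolic.exists_isLcmL (hN : IsParabolic N)
    (hL : ∀ a b : M, (∃ c, LDvd a c ∧ LDvd b c) → ∃ m, IsLcmL a b m) (a b : N)
    (h : ∃ c, LDvd a c ∧ LDvd b c) : ∃ m, IsLcmL a b m := by
  obtain ⟨c, hac, hbc⟩ := h
  obtain ⟨m, hm⟩ := hL a b ⟨c, hN.1.ldvd_coe_iff.2 hac, hN.1.ldvd_coe_iff.2 hbc⟩
  have hmN : m ∈ N := hN.2.1 a b m a.2 b.2 hm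
  refine ⟨⟨m, hmN⟩, hN.1.ldvd_coe_iff.1 hm.1, hN.1.ldvd_coe_iff.1 hm.2.1, fun d had hbd => ?_⟩
  exact hN.1.ldvd_coe_iff.1 (hm.2.2 d (hN.1.ldvd_coe_iff.2 had) (hN.1.ldvd_coe_iff.2 hbd))

theorem IsParabolic.exists_isLcmR (hN : IsParabolic N)
    (hR : ∀ a b : M, (∃ c, RDvd a c ∧ RDvd b c) → ∃ m, IsLcmR a b m) (a b : N)
    (h : ∃ c, RDvd a c ∧ RDvd b c) : ∃ m, IsLcmR a b m := by
  obtain ⟨c, hac, hbc⟩ := h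
  obtain ⟨m, hm⟩ := hR a b ⟨c, hN.1.rdvd_coe_iff.2 hac, hN.1.rdvd_coe_iff.2 hbc⟩
  have hmN : m ∈ N := hN.2.2 a b m a.2 b.2 hm
  refine ⟨⟨m, hmN⟩, hN.1.rdvd_coe_iff.1 hm.1, hN.1.rdvd_coe_iff.1 hm.2.1, fun d had hbd => ?_⟩
  exact hN.1.rdvd_coe_iff.1 (hm.2.2 d (hN.1.rdvd_coe_iff.2 had) (hN.1.rdvd_coe_iff.2 hbd))

theorem IsParabolic.isPreGarside (hM : IsPreGarside M) (hN : IsParabolic N) :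
    IsPreGarside N :=
  ⟨hM.1.submonoid N, hM.2.1.submonoid N, hN.exists_isLcmL hM.2.2.1, hN.exists_isLcmR hM.2.2.2⟩

theorem IsParabolic.lcmL_mem (hM : IsPreGarside M) (hN : IsParabolic N) {X : Set M}
    (hXN : X ⊆ N) {m : M} (hXm : ∀ x ∈ X, LDvd x m)
    (hm : ∀ a : M, (∀ x ∈ X, LDvd x a) → LDvd m a) : m ∈ N := by
  obtain ⟨ν, hν⟩ : ∃ ν : M → ℕ, IsAtomicNorm ν := hM.2.1
  obtain ⟨-, hA, hL, -⟩ := hM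
  suffices climb : ∀ n, ∀ y ∈ N, LDvd y m → ν m < ν y + n → m ∈ N from
    climb (ν m + 1) 1 N.one_mem ⟨m, (one_mul m).symm⟩ (by omega)
  intro n
  induction n with
  | zero =>
    intro y _ hym hlt
    have := hν.le_of_ldvd hym
    omega
  | succ n ih =>
    intro y hy hym hlt
    by_cases hXy : ∀ x ∈ X, LDvd x y
    · rwa [hA.ldvd_antisymm (hm y hXy) hym]
    push Not at hXy
    obtain ⟨x, hx, hxy⟩ := hXy
    obtain ⟨w, hw⟩ := hL y x ⟨m, hym, hXm x hx⟩
    have hwm : LDvd w m := hw.2.2 m hym (hXm x hx)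
    have hyw : ν y < ν w := hν.lt_of_ldvd_of_ne hw.1 (by rintro rfl; exact hxy hw.2.1)
    have hνw : ν w ≤ ν m := hν.le_of_ldvd hwm
    exact ih w (hN.2.1 y x w hy (hXN hx) hw) hwm (by omega)

theorem IsParabolic.lcmR_mem (hM : IsPreGarside M) (hN : IsParabolic N) {X : Set M}
    (hXN : X ⊆ N) {m : M} (hXm : ∀ x ∈ X, RDvd x m)
    (hm : ∀ a : M, (∀ x ∈ X, RDvd x a) → RDvd m a) : m ∈ N := by
  obtain ⟨ν, hν⟩ : ∃ ν : M → ℕ, IsAtomicNorm ν := hM.2.1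
  obtain ⟨-, hA, -, hR⟩ := hM
  suffices climb : ∀ n, ∀ y ∈ N, RDvd y m → ν m < ν y + n → m ∈ N from
    climb (ν m + 1) 1 N.one_mem ⟨m, (mul_one m).symm⟩ (by omega)
  intro n
  induction n with
  | zero =>
    intro y _ hym hlt
    have := hν.le_of_rdvd hym
    omega
  | succ n ih =>
    intro y hy hym hlt
    by_cases hXy : ∀ x ∈ X, RDvd x y
    · rwa [hA.rdvd_antisymm (hm y hXy) hym]
    push Not at hXy
    obtain ⟨x, hx, hxy⟩ := hXy
    obtain ⟨w, hw⟩ := hR y x ⟨m, hym, hXm x hx⟩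
    have hwm : RDvd w m := hw.2.2 m hym (hXm x hx)
    have hyw : ν y < ν w := hν.lt_of_rdvd_of_ne hw.1 (by rintro rfl; exact hxy hw.2.1)
    have hνw : ν w ≤ ν m := hν.le_of_rdvd hwm
    exact ih w (hN.2.2 y x w hy (hXN hx) hw) hwm (by omega)

end Submonoid

/-- **Lemma 2.3.** A parabolic submonoid `N` of a preGarside monoid is itself a
preGarside monoid, and the gcds (and lcms, when they exist) in `M` of nonempty
subsets of `N` belong to `N`. -/
theorem lemma_2_3 {M : Type*} [Monoid M] (hM : IsPreGarside M) (N : Submonoid M)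
    (hN : IsParabolic N) :
    IsPreGarside ↥N ∧
    ∀ X : Set M, X.Nonempty → X ⊆ (N : Set M) →
      (∀ d : M, ((∀ x ∈ X, LDvd d x) ∧ ∀ a : M, (∀ x ∈ X, LDvd a x) → LDvd a d) → d ∈ N) ∧
      (∀ d : M, ((∀ x ∈ X, RDvd d x) ∧ ∀ a : M, (∀ x ∈ X, RDvd a x) → RDvd a d) → d ∈ N) ∧
      (∀ m : M, ((∀ x ∈ X, LDvd x m) ∧ ∀ a : M, (∀ x ∈ X, LDvd x a) → LDvd m a) → m ∈ N) ∧
      (∀ m : M, ((∀ x ∈ X, RDvd x m) ∧ ∀ a : M, (∀ x ∈ X, RDvd x a) → RDvd m a) → m ∈ N) := by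
  refine ⟨hN.isPreGarside hM, fun X ⟨x, hx⟩ hXN => ⟨?_, ?_, ?_, ?_⟩⟩
  · exact fun d hd => hN.1.mem_of_ldvd (hd.1 x hx) (hXN hx)
  · exact fun d hd => hN.1.mem_of_rdvd (hd.1 x hx) (hXN hx)
  · exact fun m hm => hN.lcmL_mem hM hXN hm.1 hm.2
  · exact fun m hm => hN.lcmR_mem hM hXN hm.1 hm.2

end PG
end

section
/- Let M be a preGarside monoid, let S be a generating set for M that does not contain 1, and let f_L be a left selector on S in M. Then M is isomorphic, as a monoid, to the monoid M_L(Γ_L, f_L) presented by generating set S and relations x·f_L(x,y) = y·f_L(y,x) for each edge {x,y} of Γ_L; that is, these relations form a monoid presentation of M on S. -/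
namespace PG

variable {M : Type*} [Monoid M]

/-! Atomicity makes "proper right factor" a well-founded relation, so one can induct on the
common image `a` of two nonempty words `x u'` and `y v'`. If `x = y`, cancel `x`. Otherwise the
lcm `x ∨_L y` exists and left-divides `a`, say `a = (x ∨_L y) w`, and it is represented both by
`x f_L(x,y)` and by `y f_L(y,x)`. Then `u'` and `f_L(x,y) w` represent the same proper right
factor of `a`, as do `v'` and `f_L(y,x) w`, and induction plus one defining relation connect
`x u'` to `y v'`. -/

theorem IsCancellative.mul_left_cancel (h : IsCancellative M) {a b c : M} (habc : a * b = a * c) :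
    b = c :=
  h b c a 1 (by simpa only [mul_one] using habc)

theorem IsAtomicMon.eq_one_of_mul_eq_one (h : IsAtomicMon M) {a b : M} (hab : a * b = 1) :
    a = 1 := by
  obtain ⟨ν, hpos, hsuper⟩ := h
  by_contra ha
  have h11 := hsuper 1 1
  have hab' := hsuper a b
  have := hpos a ha
  rw [mul_one] at h11
  rw [hab] at hab'
  omega

theorem IsAtomicMon.wellFounded_properRightFactor (h : IsAtomicMon M) :
    WellFounded fun b a : M => ∃ x ≠ 1, a = x * b := by
  obtain ⟨ν, hpos, hsuper⟩ := h
  refine Subrelation.wf ?_ (InvImage.wf ν wellFounded_lt)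
  rintro b _ ⟨x, hx, rfl⟩
  have := hsuper x b
  have := hpos x hx
  show ν b < ν (x * b)
  omega

theorem IsLcmL.unique (hcan : IsCancellative M) (hat : IsAtomicMon M) {a b m m' : M}
    (hm : IsLcmL a b m) (hm' : IsLcmL a b m') : m = m' := by
  obtain ⟨c, hc⟩ := hm.2.2 m' hm'.1 hm'.2.1
  obtain ⟨d, hd⟩ := hm'.2.2 m hm.1 hm.2.1
  have hcd : c * d = 1 :=
    hcan.mul_left_cancel (a := m) (by rw [← mul_assoc, ← hc, ← hd, mul_one])
  rw [hc, hat.eq_one_of_mul_eq_one hcd, mul_one]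

section Presentation

variable {α : Type*} (f : α → M) (fL : α → α → FreeMonoid α)

def IsLeftSelector : Prop :=
  ∀ x y : α, x ≠ y → (∃ m : M, IsLcmL (f x) (f y) m) →
    IsLcmL (f x) (f y) (FreeMonoid.lift f (FreeMonoid.of x * fL x y)) ∧
    IsLcmL (f x) (f y) (FreeMonoid.lift f (FreeMonoid.of y * fL y x))

/-- The defining relations of `M_L(Γ_L, f_L)`: a pair `x ≠ y` with an existing lcm is an edge
of `Γ_L`. -/
def leftSelectorRel (u v : FreeMonoid α) : Prop :=
  ∃ x y : α, x ≠ y ∧ (∃ m : M, IsLcmL (f x) (f y) m) ∧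
    u = FreeMonoid.of x * fL x y ∧ v = FreeMonoid.of y * fL y x

variable {f fL}

theorem IsLeftSelector.lift_eq (hcan : IsCancellative M) (hat : IsAtomicMon M)
    (hsel : IsLeftSelector f fL) {x y : α} (hxy : x ≠ y) (hm : ∃ m : M, IsLcmL (f x) (f y) m) :
    FreeMonoid.lift f (FreeMonoid.of x * fL x y) = FreeMonoid.lift f (FreeMonoid.of y * fL y x) :=
  (hsel x y hxy hm).1.unique hcan hat (hsel x y hxy hm).2

theorem IsLeftSelector.conGen_le_ker (hcan : IsCancellative M) (hat : IsAtomicMon M)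
    (hsel : IsLeftSelector f fL) : conGen (leftSelectorRel f fL) ≤ Con.ker (FreeMonoid.lift f) :=
  Con.conGen_le.mpr fun _ _ ⟨_, _, hxy, hm, hu, hv⟩ => by
    rw [Con.ker_rel, hu, hv]
    exact hsel.lift_eq hcan hat hxy hm

theorem FreeMonoid.lift_eq_one_iff (hat : IsAtomicMon M) (hf : ∀ x, f x ≠ 1)
    {u : FreeMonoid α} : FreeMonoid.lift f u = 1 ↔ u = 1 := by
  refine ⟨fun hu => ?_, fun hu => hu ▸ map_one _⟩
  cases u with
  | one => rfl
  | of_mul x u =>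
    rw [map_mul, FreeMonoid.lift_eval_of] at hu
    exact absurd (hat.eq_one_of_mul_eq_one hu) (hf x)

theorem IsLeftSelector.exists_factor_eq (hcan : IsCancellative M) (hat : IsAtomicMon M)
    (hlcm : ∀ a b : M, (∃ c, LDvd a c ∧ LDvd b c) → ∃ m, IsLcmL a b m)
    (hsurj : Function.Surjective (FreeMonoid.lift f)) (hsel : IsLeftSelector f fL)
    {x y : α} (hxy : x ≠ y) {u v : FreeMonoid α}
    (h : f x * FreeMonoid.lift f u = f y * FreeMonoid.lift f v) :
    ∃ w, FreeMonoid.lift f u = FreeMonoid.lift f (fL x y * w) ∧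
      FreeMonoid.lift f v = FreeMonoid.lift f (fL y x * w) := by
  have hm := hlcm _ _ ⟨_, ⟨_, rfl⟩, ⟨_, h⟩⟩
  obtain ⟨t, ht⟩ := (hsel x y hxy hm).1.2.2 _ ⟨_, rfl⟩ ⟨_, h⟩
  obtain ⟨w, rfl⟩ := hsurj t
  refine ⟨w, hcan.mul_left_cancel (a := f x) ?_, hcan.mul_left_cancel (a := f y) ?_⟩
  · rw [ht]
    simp only [map_mul, FreeMonoid.lift_eval_of, mul_assoc]
  · rw [← h, ht, hsel.lift_eq hcan hat hxy hm]
    simp only [map_mul, FreeMonoid.lift_eval_of, mul_assoc]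

theorem IsLeftSelector.conGen_of_lift_eq (hcan : IsCancellative M) (hat : IsAtomicMon M)
    (hlcm : ∀ a b : M, (∃ c, LDvd a c ∧ LDvd b c) → ∃ m, IsLcmL a b m) (hf : ∀ x, f x ≠ 1)
    (hsurj : Function.Surjective (FreeMonoid.lift f)) (hsel : IsLeftSelector f fL)
    {u v : FreeMonoid α} (huv : FreeMonoid.lift f u = FreeMonoid.lift f v) :
    conGen (leftSelectorRel f fL) u v := by
  set r := conGen (leftSelectorRel f fL)
  suffices ∀ a u v, FreeMonoid.lift f u = a → FreeMonoid.lift f v = a → r u v from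
    this _ u v rfl huv.symm
  intro a
  induction a using hat.wellFounded_properRightFactor.induction with
  | _ a ih =>
    intro u v hu hv
    by_cases ha : a = 1
    · rw [(FreeMonoid.lift_eq_one_iff hat hf).mp (hu.trans ha),
        (FreeMonoid.lift_eq_one_iff hat hf).mp (hv.trans ha)]
      exact r.refl 1
    cases u with
    | one => exact absurd (hu.symm.trans (map_one _)) ha
    | of_mul x u =>
      cases v with
      | one => exact absurd (hv.symm.trans (map_one _)) ha
      | of_mul y v =>
        simp only [map_mul, FreeMonoid.lift_eval_of] at hu hv
        have ih_x := fun w (hw : FreeMonoid.lift f w = FreeMonoid.lift f u) =>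
          ih _ ⟨f x, hf x, hu.symm⟩ w u hw rfl
        have ih_y := fun w (hw : FreeMonoid.lift f w = FreeMonoid.lift f v) =>
          ih _ ⟨f y, hf y, hv.symm⟩ w v hw rfl
        have hxy_eq : f x * FreeMonoid.lift f u = f y * FreeMonoid.lift f v := hu.trans hv.symm
        by_cases hxy : x = y
        · subst hxy
          exact r.mul (r.refl _) (ih_y u (hcan.mul_left_cancel hxy_eq))
        obtain ⟨w, hu', hv'⟩ := hsel.exists_factor_eq hcan hat hlcm hsurj hxy hxy_eq
        have hrel : r (FreeMonoid.of x * fL x y) (FreeMonoid.of y * fL y x) :=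
          ConGen.Rel.of _ _ ⟨x, y, hxy, hlcm _ _ ⟨_, ⟨_, rfl⟩, ⟨_, hxy_eq⟩⟩, rfl, rfl⟩
        have hx : r (FreeMonoid.of x * u) (FreeMonoid.of x * fL x y * w) := by
          rw [mul_assoc]
          exact r.mul (r.refl _) (r.symm (ih_x _ hu'.symm))
        have hy : r (FreeMonoid.of y * fL y x * w) (FreeMonoid.of y * v) := by
          rw [mul_assoc]
          exact r.mul (r.refl _) (ih_y _ hv'.symm)
        exact r.trans hx (r.trans (r.mul hrel (r.refl w)) hy)

theorem IsLeftSelector.lift_eq_lift_iff (hcan : IsCancellative M) (hat : IsAtomicMon M)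
    (hlcm : ∀ a b : M, (∃ c, LDvd a c ∧ LDvd b c) → ∃ m, IsLcmL a b m) (hf : ∀ x, f x ≠ 1)
    (hsurj : Function.Surjective (FreeMonoid.lift f)) (hsel : IsLeftSelector f fL)
    (u v : FreeMonoid α) :
    FreeMonoid.lift f u = FreeMonoid.lift f v ↔ conGen (leftSelectorRel f fL) u v :=
  ⟨hsel.conGen_of_lift_eq hcan hat hlcm hf hsurj, fun h => hsel.conGen_le_ker hcan hat h⟩

end Presentation

/-- **Theorem 2.6.** Let `M` be a preGarside monoid, `S` a generating set of `M` not
containing `1`, and `f_L` a left selector on `S` in `M`. Then the natural morphism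
`π : S* → M` is surjective and two words have the same image iff they are congruent
modulo the relations `x · f_L(x,y) = y · f_L(y,x)` for the edges `{x,y}` of `Γ_L`;
that is, `M ≅ M_L(Γ_L, f_L)`. -/
theorem theorem_2_6 {M : Type*} [Monoid M] (hM : IsPreGarside M) (S : Set M)
    (hgen : Submonoid.closure S = ⊤) (h1 : (1 : M) ∉ S)
    (fL : ↥S → ↥S → FreeMonoid ↥S)
    (hfL : ∀ x y : ↥S, x ≠ y → (∃ m : M, IsLcmL (x : M) (y : M) m) →
      IsLcmL (x : M) (y : M)
        (FreeMonoid.lift (fun s : ↥S => (s : M)) (FreeMonoid.of x * fL x y)) ∧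
      IsLcmL (x : M) (y : M)
        (FreeMonoid.lift (fun s : ↥S => (s : M)) (FreeMonoid.of y * fL y x))) :
    Function.Surjective (FreeMonoid.lift (fun s : ↥S => (s : M))) ∧
    ∀ u v : FreeMonoid ↥S,
      FreeMonoid.lift (fun s : ↥S => (s : M)) u = FreeMonoid.lift (fun s : ↥S => (s : M)) v ↔
      (conGen fun u' v' : FreeMonoid ↥S => ∃ x y : ↥S, x ≠ y ∧
        (∃ m : M, IsLcmL (x : M) (y : M) m) ∧
        u' = FreeMonoid.of x * fL x y ∧ v' = FreeMonoid.of y * fL y x) u v := by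
  obtain ⟨hcan, hat, hlcm, -⟩ := hM
  have hsurj : Function.Surjective (FreeMonoid.lift fun s : ↥S => (s : M)) :=
    MonoidHom.mrange_eq_top.mp ((Submonoid.closure_eq_mrange S).symm.trans hgen)
  have hS : ∀ x : ↥S, (x : M) ≠ 1 := fun x hx => h1 (hx ▸ x.2)
  exact ⟨hsurj, IsLeftSelector.lift_eq_lift_iff hcan hat hlcm hS hsurj hfL⟩

end PG
end

section
/- Let M1 *_N M2 be a special amalgam of monoids. Then the canonical morphisms j1 : M1 → M1 *_N M2 and j2 : M2 → M1 *_N M2 are injective; the submonoids j1(M1), j2(M2), and j1(ι1(N)) are special submonoids of M1 *_N M2; and j1(M1) ∩ j2(M2) = j1(ι1(N)) = j2(ι2(N)). -/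
namespace PG

variable {M : Type*} [Monoid M]

/-!
If `ι₂` is injective and `ι₂(N)` is special in `M₂`, then `ι₁ ∘ ι₂⁻¹`, extended by zero outside
`ι₂(N)`, is a monoid hom `M₂ → M₁ ∪ {0}`. Together with the inclusion `M₁ → M₁ ∪ {0}` it induces
a retraction `ρ₁` of `M₁ *_N M₂` onto `M₁ ∪ {0}`, so `j₁` is injective. The nonzero elements of
`M₁ ∪ {0}` form a special submonoid, hence so does its preimage under `ρ₁`; as a generator
`j₂(b)` has `ρ₁(j₂ b) ≠ 0` only for `b ∈ ι₂(N)`, an induction on generators shows that this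
preimage is exactly `j₁(M₁)`. The same induction identifies the special submonoid
`j₁(M₁) ∩ j₂(M₂)` with `j₁(ι₁(N))`.
-/

theorem IsSpecial.comap {M' : Type*} [Monoid M'] {S : Submonoid M'} (hS : IsSpecial S)
    (f : M →* M') : IsSpecial (S.comap f) := fun a b hab => hS (f a) (f b) (by simpa using hab)

theorem IsSpecial.inf {S T : Submonoid M} (hS : IsSpecial S) (hT : IsSpecial T) :
    IsSpecial (S ⊓ T) := fun a b hab =>
  have ⟨haS, hbS⟩ := hS a b hab.1
  have ⟨haT, hbT⟩ := hT a b hab.2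
  ⟨⟨haS, haT⟩, ⟨hbS, hbT⟩⟩

theorem IsSpecial.le_of_closure_eq_top {S T : Submonoid M} (hT : IsSpecial T) {G : Set M}
    (hG : Submonoid.closure G = ⊤) (hGT : ∀ g ∈ G, g ∈ T → g ∈ S) : T ≤ S := by
  intro x hxT
  have hx : x ∈ Submonoid.closure G := hG ▸ Submonoid.mem_top x
  induction hx using Submonoid.closure_induction with
  | mem g hg => exact hGT g hg hxT
  | one => exact S.one_mem
  | mul x y _ _ hx hy =>
    have ⟨hxT, hyT⟩ := hT x y hxT
    exact S.mul_mem (hx hxT) (hy hyT)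

theorem isSpecial_mrange_coeMonoidHom :
    IsSpecial (MonoidHom.mrange (WithZero.coeMonoidHom : M →* _)) := by
  rintro a b ⟨c, hc⟩
  have hab : a * b ≠ 0 := hc ▸ WithZero.coe_ne_zero
  exact ⟨WithZero.ne_zero_iff_exists.1 (left_ne_zero_of_mul hab),
    WithZero.ne_zero_iff_exists.1 (right_ne_zero_of_mul hab)⟩

section ExtendByZero

variable {T : Type*} [Monoid T] {S : Submonoid M}

open scoped Classical in
noncomputable def IsSpecial.extendByZero (hS : IsSpecial S) (f : S →* T) : M →* WithZero T where
  toFun x := if hx : x ∈ S then f ⟨x, hx⟩ else 0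
  map_one' := by
    simp only [dif_pos S.one_mem]
    exact congrArg _ f.map_one
  map_mul' x y := by
    by_cases hx : x ∈ S <;> by_cases hy : y ∈ S
    · simp [hx, hy, S.mul_mem hx hy, ← WithZero.coe_mul, ← map_mul]
    · have hxy : x * y ∉ S := fun h => hy (hS x y h).2
      simp [hx, hy, hxy]
    all_goals
      have hxy : x * y ∉ S := fun h => hx (hS x y h).1
      simp [hx, hy, hxy]

theorem IsSpecial.extendByZero_apply_of_mem (hS : IsSpecial S) (f : S →* T) {x : M}
    (hx : x ∈ S) : hS.extendByZero f x = f ⟨x, hx⟩ := dif_pos hx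

theorem IsSpecial.extendByZero_ne_zero_iff (hS : IsSpecial S) (f : S →* T) {x : M} :
    hS.extendByZero f x ≠ 0 ↔ x ∈ S := by
  by_cases hx : x ∈ S
  · simp [hS.extendByZero_apply_of_mem f hx, hx]
  · simp [IsSpecial.extendByZero, hx]

end ExtendByZero

theorem mrange_eq_comap_of_retraction {A : Type*} [Monoid A] {G : Set A}
    (hG : Submonoid.closure G = ⊤) (j : M →* A) (ρ : A →* WithZero M) (hρj : ∀ a, ρ (j a) = a)
    (hρG : ∀ g ∈ G, ρ g ≠ 0 → g ∈ MonoidHom.mrange j) :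
    MonoidHom.mrange j = (MonoidHom.mrange WithZero.coeMonoidHom).comap ρ := by
  refine le_antisymm ?_ ((isSpecial_mrange_coeMonoidHom.comap ρ).le_of_closure_eq_top hG ?_)
  · rintro _ ⟨a, rfl⟩
    exact ⟨a, (hρj a).symm⟩
  · rintro g hg ⟨a, ha⟩
    exact hρG g hg (ha ▸ WithZero.coe_ne_zero)

section Along

variable {N T : Type*} [Monoid N] [Monoid T] (ι : N →* M) (hι : Function.Injective ι)
  (hs : IsSpecial (MonoidHom.mrange ι))

/-- The hom `g ∘ ι⁻¹` on the range of `ι`, extended by zero. -/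
noncomputable def extendByZeroAlong (g : N →* T) : M →* WithZero T :=
  hs.extendByZero <| g.comp <|
    (MulEquiv.ofLeftInverse' ι (Function.leftInverse_invFun hι)).symm.toMonoidHom

theorem extendByZeroAlong_apply (g : N →* T) (n : N) :
    extendByZeroAlong ι hι hs g (ι n) = g n := by
  rw [extendByZeroAlong, hs.extendByZero_apply_of_mem _ ⟨n, rfl⟩, MonoidHom.comp_apply,
    MulEquiv.coe_toMonoidHom, MulEquiv.ofLeftInverse'_symm_apply]
  exact congrArg _ (congrArg g (Function.leftInverse_invFun hι n))

theorem extendByZeroAlong_ne_zero_iff (g : N →* T) {x : M} :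
    extendByZeroAlong ι hι hs g x ≠ 0 ↔ x ∈ MonoidHom.mrange ι :=
  hs.extendByZero_ne_zero_iff _

end Along

section SpecialAmalgam

variable {M₁ M₂ N : Type*} [Monoid M₁] [Monoid M₂] [Monoid N] (ι₁ : N →* M₁) (ι₂ : N →* M₂)

def amalgamLift {T : Type*} [Monoid T] (f₁ : M₁ →* T) (f₂ : M₂ →* T)
    (hf : ∀ n, f₁ (ι₁ n) = f₂ (ι₂ n)) : Amalgam ι₁ ι₂ →* T :=
  (amalgamCon ι₁ ι₂).lift (Monoid.Coprod.lift f₁ f₂) <| Con.conGen_le.2 <| by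
    rintro _ _ ⟨n, rfl, rfl⟩
    simp [hf]

@[simp]
theorem amalgamLift_inl {T : Type*} [Monoid T] (f₁ : M₁ →* T) (f₂ : M₂ →* T)
    (hf : ∀ n, f₁ (ι₁ n) = f₂ (ι₂ n)) (a : M₁) :
    amalgamLift ι₁ ι₂ f₁ f₂ hf (amalgamInl ι₁ ι₂ a) = f₁ a :=
  Monoid.Coprod.lift_apply_inl f₁ f₂ a

@[simp]
theorem amalgamLift_inr {T : Type*} [Monoid T] (f₁ : M₁ →* T) (f₂ : M₂ →* T)
    (hf : ∀ n, f₁ (ι₁ n) = f₂ (ι₂ n)) (b : M₂) :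
    amalgamLift ι₁ ι₂ f₁ f₂ hf (amalgamInr ι₁ ι₂ b) = f₂ b :=
  Monoid.Coprod.lift_apply_inr f₁ f₂ b

theorem amalgamInl_comp : (amalgamInl ι₁ ι₂).comp ι₁ = (amalgamInr ι₁ ι₂).comp ι₂ :=
  MonoidHom.ext fun n => (Con.eq _).2 <| ConGen.Rel.of _ _ ⟨n, rfl, rfl⟩

theorem closure_range_amalgamInl_union_range_amalgamInr :
    Submonoid.closure (Set.range (amalgamInl ι₁ ι₂) ∪ Set.range (amalgamInr ι₁ ι₂)) = ⊤ := by
  refine (Submonoid.eq_top_iff' _).2 fun z => ?_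
  obtain ⟨w, rfl⟩ := (amalgamCon ι₁ ι₂).mk'_surjective z
  induction w using Monoid.Coprod.induction_on with
  | inl a => exact Submonoid.subset_closure (Or.inl ⟨a, rfl⟩)
  | inr b => exact Submonoid.subset_closure (Or.inr ⟨b, rfl⟩)
  | mul x y hx hy => rw [map_mul]; exact mul_mem hx hy

noncomputable def amalgamRetractLeft (hι₂ : Function.Injective ι₂)
    (hs₂ : IsSpecial (MonoidHom.mrange ι₂)) : Amalgam ι₁ ι₂ →* WithZero M₁ :=
  amalgamLift ι₁ ι₂ WithZero.coeMonoidHom (extendByZeroAlong ι₂ hι₂ hs₂ ι₁) fun n =>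
    (extendByZeroAlong_apply ι₂ hι₂ hs₂ ι₁ n).symm

noncomputable def amalgamRetractRight (hι₁ : Function.Injective ι₁)
    (hs₁ : IsSpecial (MonoidHom.mrange ι₁)) : Amalgam ι₁ ι₂ →* WithZero M₂ :=
  amalgamLift ι₁ ι₂ (extendByZeroAlong ι₁ hι₁ hs₁ ι₂) WithZero.coeMonoidHom fun n =>
    extendByZeroAlong_apply ι₁ hι₁ hs₁ ι₂ n

variable {ι₁ ι₂}

@[simp]
theorem amalgamRetractLeft_inl (hι₂ : Function.Injective ι₂)
    (hs₂ : IsSpecial (MonoidHom.mrange ι₂)) (a : M₁) :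
    amalgamRetractLeft ι₁ ι₂ hι₂ hs₂ (amalgamInl ι₁ ι₂ a) = a :=
  amalgamLift_inl ι₁ ι₂ _ _ _ a

theorem amalgamRetractLeft_inr (hι₂ : Function.Injective ι₂)
    (hs₂ : IsSpecial (MonoidHom.mrange ι₂)) (b : M₂) :
    amalgamRetractLeft ι₁ ι₂ hι₂ hs₂ (amalgamInr ι₁ ι₂ b) = extendByZeroAlong ι₂ hι₂ hs₂ ι₁ b :=
  amalgamLift_inr ι₁ ι₂ _ _ _ b

theorem amalgamRetractRight_inl (hι₁ : Function.Injective ι₁)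
    (hs₁ : IsSpecial (MonoidHom.mrange ι₁)) (a : M₁) :
    amalgamRetractRight ι₁ ι₂ hι₁ hs₁ (amalgamInl ι₁ ι₂ a) = extendByZeroAlong ι₁ hι₁ hs₁ ι₂ a :=
  amalgamLift_inl ι₁ ι₂ _ _ _ a

@[simp]
theorem amalgamRetractRight_inr (hι₁ : Function.Injective ι₁)
    (hs₁ : IsSpecial (MonoidHom.mrange ι₁)) (b : M₂) :
    amalgamRetractRight ι₁ ι₂ hι₁ hs₁ (amalgamInr ι₁ ι₂ b) = b :=
  amalgamLift_inr ι₁ ι₂ _ _ _ b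

theorem mrange_amalgamInl_eq_comap (hι₂ : Function.Injective ι₂)
    (hs₂ : IsSpecial (MonoidHom.mrange ι₂)) :
    MonoidHom.mrange (amalgamInl ι₁ ι₂) =
      (MonoidHom.mrange WithZero.coeMonoidHom).comap (amalgamRetractLeft ι₁ ι₂ hι₂ hs₂) := by
  refine mrange_eq_comap_of_retraction (closure_range_amalgamInl_union_range_amalgamInr ι₁ ι₂)
    _ _ (amalgamRetractLeft_inl hι₂ hs₂) ?_
  rintro _ (⟨a, rfl⟩ | ⟨b, rfl⟩) hb
  · exact ⟨a, rfl⟩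
  · rw [amalgamRetractLeft_inr, extendByZeroAlong_ne_zero_iff] at hb
    obtain ⟨n, rfl⟩ := hb
    exact ⟨ι₁ n, DFunLike.congr_fun (amalgamInl_comp ι₁ ι₂) n⟩

theorem mrange_amalgamInr_eq_comap (hι₁ : Function.Injective ι₁)
    (hs₁ : IsSpecial (MonoidHom.mrange ι₁)) :
    MonoidHom.mrange (amalgamInr ι₁ ι₂) =
      (MonoidHom.mrange WithZero.coeMonoidHom).comap (amalgamRetractRight ι₁ ι₂ hι₁ hs₁) := by
  refine mrange_eq_comap_of_retraction (closure_range_amalgamInl_union_range_amalgamInr ι₁ ι₂)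
    _ _ (amalgamRetractRight_inr hι₁ hs₁) ?_
  rintro _ (⟨a, rfl⟩ | ⟨b, rfl⟩) ha
  · rw [amalgamRetractRight_inl, extendByZeroAlong_ne_zero_iff] at ha
    obtain ⟨n, rfl⟩ := ha
    exact ⟨ι₂ n, (DFunLike.congr_fun (amalgamInl_comp ι₁ ι₂) n).symm⟩
  · exact ⟨b, rfl⟩

theorem amalgamInl_injective (hι₂ : Function.Injective ι₂)
    (hs₂ : IsSpecial (MonoidHom.mrange ι₂)) : Function.Injective (amalgamInl ι₁ ι₂) :=
  fun a a' h => WithZero.coe_injective <| by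
    simpa using congrArg (amalgamRetractLeft ι₁ ι₂ hι₂ hs₂) h

theorem amalgamInr_injective (hι₁ : Function.Injective ι₁)
    (hs₁ : IsSpecial (MonoidHom.mrange ι₁)) : Function.Injective (amalgamInr ι₁ ι₂) :=
  fun b b' h => WithZero.coe_injective <| by
    simpa using congrArg (amalgamRetractRight ι₁ ι₂ hι₁ hs₁) h

theorem isSpecial_mrange_amalgamInl (hι₂ : Function.Injective ι₂)
    (hs₂ : IsSpecial (MonoidHom.mrange ι₂)) :
    IsSpecial (MonoidHom.mrange (amalgamInl ι₁ ι₂)) := by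
  rw [mrange_amalgamInl_eq_comap hι₂ hs₂]
  exact isSpecial_mrange_coeMonoidHom.comap _

theorem isSpecial_mrange_amalgamInr (hι₁ : Function.Injective ι₁)
    (hs₁ : IsSpecial (MonoidHom.mrange ι₁)) :
    IsSpecial (MonoidHom.mrange (amalgamInr ι₁ ι₂)) := by
  rw [mrange_amalgamInr_eq_comap hι₁ hs₁]
  exact isSpecial_mrange_coeMonoidHom.comap _

theorem mem_mrange_of_amalgamInl_mem_mrange_amalgamInr (hι₁ : Function.Injective ι₁)
    (hs₁ : IsSpecial (MonoidHom.mrange ι₁)) {a : M₁}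
    (ha : amalgamInl ι₁ ι₂ a ∈ MonoidHom.mrange (amalgamInr ι₁ ι₂)) :
    a ∈ MonoidHom.mrange ι₁ := by
  rw [mrange_amalgamInr_eq_comap hι₁ hs₁, Submonoid.mem_comap, amalgamRetractRight_inl] at ha
  obtain ⟨b, hb⟩ := ha
  exact (extendByZeroAlong_ne_zero_iff ι₁ hι₁ hs₁ ι₂).1 (hb ▸ WithZero.coe_ne_zero)

theorem mem_mrange_of_amalgamInr_mem_mrange_amalgamInl (hι₂ : Function.Injective ι₂)
    (hs₂ : IsSpecial (MonoidHom.mrange ι₂)) {b : M₂}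
    (hb : amalgamInr ι₁ ι₂ b ∈ MonoidHom.mrange (amalgamInl ι₁ ι₂)) :
    b ∈ MonoidHom.mrange ι₂ := by
  rw [mrange_amalgamInl_eq_comap hι₂ hs₂, Submonoid.mem_comap, amalgamRetractLeft_inr] at hb
  obtain ⟨a, ha⟩ := hb
  exact (extendByZeroAlong_ne_zero_iff ι₂ hι₂ hs₂ ι₁).1 (ha ▸ WithZero.coe_ne_zero)

theorem mrange_amalgamInl_inf_mrange_amalgamInr (hι₁ : Function.Injective ι₁)
    (hι₂ : Function.Injective ι₂) (hs₁ : IsSpecial (MonoidHom.mrange ι₁))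
    (hs₂ : IsSpecial (MonoidHom.mrange ι₂)) :
    MonoidHom.mrange (amalgamInl ι₁ ι₂) ⊓ MonoidHom.mrange (amalgamInr ι₁ ι₂) =
      MonoidHom.mrange ((amalgamInl ι₁ ι₂).comp ι₁) := by
  have hN := amalgamInl_comp ι₁ ι₂
  refine le_antisymm (((isSpecial_mrange_amalgamInl hι₂ hs₂).inf
    (isSpecial_mrange_amalgamInr hι₁ hs₁)).le_of_closure_eq_top
      (closure_range_amalgamInl_union_range_amalgamInr ι₁ ι₂) ?_) ?_
  · rintro _ (⟨a, rfl⟩ | ⟨b, rfl⟩) hmem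
    · obtain ⟨n, rfl⟩ :=
        mem_mrange_of_amalgamInl_mem_mrange_amalgamInr hι₁ hs₁ (Submonoid.mem_inf.1 hmem).2
      exact ⟨n, rfl⟩
    · obtain ⟨n, rfl⟩ :=
        mem_mrange_of_amalgamInr_mem_mrange_amalgamInl hι₂ hs₂ (Submonoid.mem_inf.1 hmem).1
      exact ⟨n, DFunLike.congr_fun hN n⟩
  · rintro _ ⟨n, rfl⟩
    exact ⟨⟨ι₁ n, rfl⟩, ⟨ι₂ n, (DFunLike.congr_fun hN n).symm⟩⟩

end SpecialAmalgam

/-- **Proposition 3.1.** For a special amalgam `M₁ *_N M₂`, the canonical morphisms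
`j₁ : M₁ → M₁ *_N M₂` and `j₂ : M₂ → M₁ *_N M₂` are injective, the submonoids
`j₁(M₁)`, `j₂(M₂)` and `j₁(ι₁(N))` are special, and
`j₁(M₁) ∩ j₂(M₂) = j₁(ι₁(N)) = j₂(ι₂(N))`. -/
theorem proposition_3_1 {M₁ M₂ N : Type*} [Monoid M₁] [Monoid M₂] [Monoid N]
    (ι₁ : N →* M₁) (ι₂ : N →* M₂)
    (hι₁ : Function.Injective ι₁) (hι₂ : Function.Injective ι₂)
    (hs₁ : IsSpecial (MonoidHom.mrange ι₁)) (hs₂ : IsSpecial (MonoidHom.mrange ι₂)) :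
    Function.Injective (amalgamInl ι₁ ι₂) ∧ Function.Injective (amalgamInr ι₁ ι₂) ∧
    IsSpecial (MonoidHom.mrange (amalgamInl ι₁ ι₂)) ∧
    IsSpecial (MonoidHom.mrange (amalgamInr ι₁ ι₂)) ∧
    IsSpecial (MonoidHom.mrange ((amalgamInl ι₁ ι₂).comp ι₁)) ∧
    MonoidHom.mrange (amalgamInl ι₁ ι₂) ⊓ MonoidHom.mrange (amalgamInr ι₁ ι₂) =
      MonoidHom.mrange ((amalgamInl ι₁ ι₂).comp ι₁) ∧
    MonoidHom.mrange ((amalgamInl ι₁ ι₂).comp ι₁) =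
      MonoidHom.mrange ((amalgamInr ι₁ ι₂).comp ι₂) := by
  have hinf := mrange_amalgamInl_inf_mrange_amalgamInr hι₁ hι₂ hs₁ hs₂
  have hspecial₁ := isSpecial_mrange_amalgamInl (ι₁ := ι₁) hι₂ hs₂
  have hspecial₂ := isSpecial_mrange_amalgamInr (ι₂ := ι₂) hι₁ hs₁
  refine ⟨amalgamInl_injective hι₂ hs₂, amalgamInr_injective hι₁ hs₁, hspecial₁, hspecial₂,
    hinf ▸ hspecial₁.inf hspecial₂, hinf, congrArg MonoidHom.mrange (amalgamInl_comp ι₁ ι₂)⟩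

end PG
end
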